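/- Let C be a commutative ring in which 2 is invertible and let D/C be a relative Frobenius extension of rank n with Frobenius form Λ and Λ-dual bases (e_1,…,e_n),(f_1,…,f_n). Assume C·1 is a direct summand of the C-module D with F := D/C·1 finitely generated projective, let π : D → F be the quotient map, and let R ⊆ F ⊗_C F be the image of the C-linear map D → F ⊗_C F, d ↦ Σ_{i=1}^n π(d e_i) ⊗ π(f_i). Then R is contained in the submodule Sym_2(F) of symmetric tensors, and (provided R is a direct summand of Sym_2(F)) there is a surjective C-algebra homomorphism H(D/C) := T_C(F)/(R) → Cℓ_A(E,q) sending the class of π(d) to ι(π(d) ⊗ 1) for d ∈ D. -/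

import Mathlib

open TensorProduct

noncomputable section

universe u

variable (C : Type u) [CommRing C]

/-- The submodule of symmetric tensors of `F ⊗[C] F`, spanned by the `u ⊗ v + v ⊗ u`. -/
def symTensors (F : Type u) [AddCommGroup F] [Module C F] : Submodule C (F ⊗[C] F) :=
  Submodule.span C {z | ∃ u v : F, z = u ⊗ₜ[C] v + v ⊗ₜ[C] u}

variable (F : Type u) [AddCommGroup F] [Module C F]
variable (Rsub : Submodule C (F ⊗[C] F))

/-- `Q := Sym₂ F / R`. -/
abbrev SymQuot : Type u :=
  ↥(symTensors C F) ⧸ Rsub.comap (symTensors C F).subtype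

/-- The symmetrized tensor `(u, v) ↦ u ⊗ v + v ⊗ u`, as a bilinear map into `Sym₂ F`. -/
def symMk : F →ₗ[C] F →ₗ[C] ↥(symTensors C F) :=
  LinearMap.mk₂ C
    (fun u v => ⟨u ⊗ₜ[C] v + v ⊗ₜ[C] u, Submodule.subset_span ⟨u, v, rfl⟩⟩)
    (fun u u' v => Subtype.ext <| by
      simp only [Submodule.coe_add, TensorProduct.add_tmul, TensorProduct.tmul_add]; abel)
    (fun c u v => Subtype.ext <| by
      simp only [SetLike.val_smul, TensorProduct.smul_tmul', TensorProduct.tmul_smul,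
        smul_add])
    (fun u v v' => Subtype.ext <| by
      simp only [Submodule.coe_add, TensorProduct.add_tmul, TensorProduct.tmul_add]; abel)
    (fun c u v => Subtype.ext <| by
      simp only [SetLike.val_smul, TensorProduct.smul_tmul', TensorProduct.tmul_smul,
        smul_add])

variable (A : Type u) [CommRing A] [Algebra C A]
variable (j : SymQuot C F Rsub →ₗ[C] A)

/-- The `C`-bilinear map `F × F → A`, `(u,v) ↦ j (class of u ⊗ v + v ⊗ u)`. -/
def bil0 : F →ₗ[C] F →ₗ[C] A :=
  (symMk C F).compr₂ (j ∘ₗ (Rsub.comap (symTensors C F).subtype).mkQ)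

/-- The `A`-bilinear extension of `bil0` to `E = A ⊗[C] F`. -/
def bilE : (A ⊗[C] F) →ₗ[A] (A ⊗[C] F) →ₗ[A] A :=
  LinearMap.liftBaseChange A
    (((LinearMap.liftBaseChangeEquiv A).restrictScalars C).toLinearMap ∘ₗ
      bil0 C F Rsub A j)

/-- The `A`-valued quadratic form `q (x) = ½ ⬝ B (x, x)` on `E = A ⊗[C] F`. -/
def cliffordQ [Invertible (2 : C)] : QuadraticForm A (A ⊗[C] F) :=
  LinearMap.BilinMap.toQuadraticMap
    ((algebraMap C A (⅟ 2) : A) • bilE C F Rsub A j)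

/-- The canonical map `F ⊗[C] F → T_C(F)`, `u ⊗ v ↦ ι u * ι v`. -/
def tensorSquareMul : F ⊗[C] F →ₗ[C] TensorAlgebra C F :=
  TensorProduct.lift
    ((LinearMap.mul C (TensorAlgebra C F)).compl₁₂ (TensorAlgebra.ι C) (TensorAlgebra.ι C))

/-- The relation on `T_C(F)` whose ring quotient is `T_C(F)/(R)`, the quotient by the
two-sided ideal generated by `R ⊆ F ⊗ F ⊆ T_C(F)`. -/
def relOfR : TensorAlgebra C F → TensorAlgebra C F → Prop :=
  fun x y => (∃ r ∈ Rsub, x = tensorSquareMul C F r) ∧ y = 0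

section Frobenius

variable (D : Type u) [CommRing D] [Algebra C D]

/-- `F := D / C·1`. -/
abbrev FrobQuotF : Type u := D ⧸ Submodule.span C {(1 : D)}

/-- The quotient map `π : D → F = D/C·1`. -/
def frobPi : D →ₗ[C] FrobQuotF C D := (Submodule.span C {(1 : D)}).mkQ

/-- The map `ρ : D → F ⊗ F`, `d ↦ ∑ i, π (d * e i) ⊗ π (f i)`, built out of a pair of
`Λ`-dual bases of a relative Frobenius extension `D/C` of rank `n`. -/
def frobRho {n : ℕ} (e f : Fin n → D) : D →ₗ[C] FrobQuotF C D ⊗[C] FrobQuotF C D :=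
  ∑ i : Fin n,
    ((TensorProduct.mk C (FrobQuotF C D) (FrobQuotF C D)).flip (frobPi C D (f i))).comp
      ((frobPi C D).comp (LinearMap.mulRight C (e i)))

end Frobenius


/-!
The relations are symmetric because of the Casimir-type identity
`∑ i, (x e_i) ⊗ f_i = ∑ a b, Λ (x f_a f_b) • e_a ⊗ e_b`, whose coefficients are symmetric in
`a, b`; as `2` is invertible, tensors fixed by the swap are sums of `u ⊗ v + v ⊗ u`.

In the Clifford algebra `ι u ι v + ι v ι u = B (u, v)`, so `u ↦ ι (1 ⊗ u)` sends a symmetric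
`r ∈ R` to `½ B(r) = ½ j [r + r] = 0`, and hence factors through `T_C(F)/(R)`. The image contains
all anticommutators, hence the image of `Q` in `A`; by the universal property `A` is generated by
that image, and `Cℓ_A(E, q)` is generated as an `A`-algebra by `ι (1 ⊗ F)`.
-/

section SymTensors

variable {C F}

theorem comm_eq_self_of_mem_symTensors {z : F ⊗[C] F} (hz : z ∈ symTensors C F) :
    TensorProduct.comm C F F z = z := by
  induction hz using Submodule.span_induction with
  | mem _ h => obtain ⟨u, v, rfl⟩ := h; simp [add_comm]
  | zero => simp
  | add _ _ _ _ hx hy => rw [map_add, hx, hy]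
  | smul _ _ _ hx => rw [map_smul, hx]

@[simp]
theorem coe_symMk (u v : F) : (symMk C F u v : F ⊗[C] F) = u ⊗ₜ v + v ⊗ₜ u := rfl

theorem coe_lift_symMk (z : F ⊗[C] F) :
    (TensorProduct.lift (symMk C F) z : F ⊗[C] F) = z + TensorProduct.comm C F F z := by
  induction z using TensorProduct.induction_on with
  | zero => simp
  | tmul u v => rfl
  | add x y hx hy => simp only [map_add, Submodule.coe_add, hx, hy]; abel

theorem mem_symTensors_of_comm_eq_self [Invertible (2 : C)] {z : F ⊗[C] F}
    (hz : TensorProduct.comm C F F z = z) : z ∈ symTensors C F := by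
  have h : ⅟(2 : C) • (z + TensorProduct.comm C F F z) = z := by
    rw [hz, ← two_smul C, smul_smul, invOf_mul_self, one_smul]
  rw [← h, ← coe_lift_symMk]
  exact Submodule.smul_mem _ _ (Subtype.property _)

theorem lift_symMk_surjective : Function.Surjective (TensorProduct.lift (symMk C F)) := by
  rintro ⟨s, hs⟩
  suffices ∃ z, (TensorProduct.lift (symMk C F) z : F ⊗[C] F) = s from
    this.imp fun _ h => Subtype.ext h
  induction hs using Submodule.span_induction with
  | mem _ h => obtain ⟨u, v, rfl⟩ := h; exact ⟨u ⊗ₜ v, rfl⟩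
  | zero => exact ⟨0, by simp⟩
  | add _ _ _ _ hx hy =>
    obtain ⟨x, rfl⟩ := hx; obtain ⟨y, rfl⟩ := hy; exact ⟨x + y, by simp⟩
  | smul c _ _ hx => obtain ⟨x, rfl⟩ := hx; exact ⟨c • x, by simp⟩

end SymTensors

section DualBasis

variable {C} {D : Type*} [CommRing D] [Algebra C D] {n : ℕ}

theorem repr_eq_of_dual (Λ : D →ₗ[C] C) (e : Module.Basis (Fin n) C D) {f : Fin n → D}
    (hdual : ∀ i j, Λ (e i * f j) = if i = j then 1 else 0) (x : D) (i : Fin n) :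
    e.repr x i = Λ (x * f i) := by
  calc e.repr x i = Λ ((∑ k, e.repr x k • e k) * f i) := by
        simp only [Finset.sum_mul, smul_mul_assoc, map_sum, map_smul, hdual, smul_eq_mul,
          mul_ite, mul_one, mul_zero, Finset.sum_ite_eq', Finset.mem_univ, if_true]
    _ = Λ (x * f i) := by rw [e.sum_repr]

theorem sum_mul_tmul_eq_of_dual (Λ : D →ₗ[C] C) (e : Module.Basis (Fin n) C D) {f : Fin n → D}
    (hdual : ∀ i j, Λ (e i * f j) = if i = j then 1 else 0) (x : D) :
    ∑ i, (x * e i) ⊗ₜ[C] f i = ∑ a, ∑ b, Λ (x * f a * f b) • (e a ⊗ₜ[C] e b) := by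
  have expand : ∀ y, y = ∑ i, Λ (y * f i) • e i := fun y => by
    simp_rw [← repr_eq_of_dual Λ e hdual, e.sum_repr]
  have coeff : ∀ a b, ∑ i, Λ (x * e i * f a) * Λ (f i * f b) = Λ (x * f a * f b) := by
    intro a b
    conv_rhs => rw [expand (f b)]
    simp only [Finset.mul_sum, mul_smul_comm, map_sum, map_smul, smul_eq_mul]
    exact Finset.sum_congr rfl fun i _ => by ring_nf
  calc ∑ i, (x * e i) ⊗ₜ[C] f i
      = ∑ i, ∑ a, ∑ b, (Λ (x * e i * f a) * Λ (f i * f b)) • (e a ⊗ₜ[C] e b) := by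
        refine Finset.sum_congr rfl fun i _ => ?_
        conv_lhs => rw [expand (x * e i), expand (f i)]
        simp only [TensorProduct.sum_tmul, TensorProduct.tmul_sum, TensorProduct.smul_tmul_smul]
        exact Finset.sum_comm
    _ = ∑ a, ∑ b, Λ (x * f a * f b) • (e a ⊗ₜ[C] e b) := by
        rw [Finset.sum_comm]
        simp only [← coeff, Finset.sum_smul]
        exact Finset.sum_congr rfl fun a _ => Finset.sum_comm

theorem comm_sum_mul_tmul_of_dual (Λ : D →ₗ[C] C) (e : Module.Basis (Fin n) C D)
    {f : Fin n → D} (hdual : ∀ i j, Λ (e i * f j) = if i = j then 1 else 0) (x : D) :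
    TensorProduct.comm C D D (∑ i, (x * e i) ⊗ₜ[C] f i) = ∑ i, (x * e i) ⊗ₜ[C] f i := by
  simp only [sum_mul_tmul_eq_of_dual Λ e hdual, map_sum, map_smul, TensorProduct.comm_tmul]
  rw [Finset.sum_comm]
  simp only [mul_right_comm x]

end DualBasis

section FrobeniusRelations

variable {C} {D : Type u} [CommRing D] [Algebra C D] {n : ℕ}

theorem frobRho_apply (e f : Fin n → D) (d : D) :
    frobRho C D e f d =
      TensorProduct.map (frobPi C D) (frobPi C D) (∑ i, (d * e i) ⊗ₜ[C] f i) := by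
  simp [frobRho, LinearMap.sum_apply]

theorem range_frobRho_le_symTensors [Invertible (2 : C)] (Λ : D →ₗ[C] C)
    (e : Module.Basis (Fin n) C D) {f : Fin n → D}
    (hdual : ∀ i j, Λ (e i * f j) = if i = j then 1 else 0) :
    LinearMap.range (frobRho C D e f) ≤ symTensors C (FrobQuotF C D) := by
  rintro _ ⟨d, rfl⟩
  apply mem_symTensors_of_comm_eq_self
  rw [frobRho_apply, ← TensorProduct.map_comm, comm_sum_mul_tmul_of_dual Λ e hdual]

end FrobeniusRelations

theorem Algebra.adjoin_range_eq_top_of_unique_lift {R M : Type*} {P : Type u} [CommRing R]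
    [AddCommGroup M] [Module R M] [CommRing P] [Algebra R P] (g : M →ₗ[R] P)
    (hUP : ∀ (B : Type u) [CommRing B] [Algebra R B] (k : M →ₗ[R] B),
      ∃! h : P →ₐ[R] B, h.toLinearMap ∘ₗ g = k) :
    Algebra.adjoin R (Set.range g) = ⊤ := by
  set S := Algebra.adjoin R (Set.range g)
  obtain ⟨h, hh, -⟩ := hUP S (LinearMap.codRestrict (Subalgebra.toSubmodule S) g
    fun m => Algebra.subset_adjoin ⟨m, rfl⟩)
  have hid : S.val.comp h = AlgHom.id R P := by
    obtain ⟨_, -, huniq⟩ := hUP P g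
    rw [huniq (S.val.comp h) (by ext m; exact congrArg Subtype.val (LinearMap.congr_fun hh m)),
      huniq (AlgHom.id R P) rfl]
  exact Algebra.eq_top_iff.2 fun a => (congrArg (· a) hid : (h a : P) = a) ▸ (h a).2

section Clifford

variable {C F}

theorem bil0_comm (u v : F) : bil0 C F Rsub A j v u = bil0 C F Rsub A j u v := by
  simp only [bil0, LinearMap.compr₂_apply]
  rw [show symMk C F v u = symMk C F u v from
    Subtype.ext <| by rw [coe_symMk, coe_symMk, add_comm]]

theorem lift_bil0 : TensorProduct.lift (bil0 C F Rsub A j) =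
    (j ∘ₗ (Rsub.comap (symTensors C F).subtype).mkQ) ∘ₗ TensorProduct.lift (symMk C F) :=
  TensorProduct.lift_compr₂ _

theorem range_lift_bil0 : LinearMap.range (TensorProduct.lift (bil0 C F Rsub A j)) =
    LinearMap.range j := by
  rw [lift_bil0, LinearMap.range_comp_of_range_eq_top _
      (LinearMap.range_eq_top.2 lift_symMk_surjective),
    LinearMap.range_comp_of_range_eq_top _ (Submodule.range_mkQ _)]

theorem lift_bil0_eq_zero {r : F ⊗[C] F} (hr : r + TensorProduct.comm C F F r ∈ Rsub) :
    TensorProduct.lift (bil0 C F Rsub A j) r = 0 := by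
  rw [lift_bil0, LinearMap.comp_apply, LinearMap.comp_apply, Submodule.mkQ_apply,
    (Submodule.Quotient.mk_eq_zero _).2 (by simpa [coe_lift_symMk] using hr), map_zero]

variable [Invertible (2 : C)]

theorem polar_cliffordQ_one_tmul (u v : F) :
    QuadraticMap.polar (cliffordQ C F Rsub A j) (1 ⊗ₜ u) (1 ⊗ₜ v) = bil0 C F Rsub A j u v := by
  simp only [cliffordQ, LinearMap.BilinMap.polar_toQuadraticMap, LinearMap.smul_apply,
    bilE, LinearMap.liftBaseChange_tmul, one_smul, LinearMap.comp_apply, LinearEquiv.coe_coe,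
    LinearEquiv.restrictScalars_apply, smul_eq_mul]
  have half : algebraMap C A ⅟2 * 2 = 1 := by
    rw [← map_ofNat (algebraMap C A) 2, ← map_mul, invOf_mul_self, map_one]
  linear_combination bil0 C F Rsub A j u v * half +
    algebraMap C A ⅟2 * bil0_comm Rsub A j u v

def cliffordι : F →ₗ[C] CliffordAlgebra (cliffordQ C F Rsub A j) :=
  (CliffordAlgebra.ι _).restrictScalars C ∘ₗ TensorProduct.mk C A F 1

theorem cliffordι_apply (u : F) : cliffordι Rsub A j u = CliffordAlgebra.ι _ (1 ⊗ₜ u) := rfl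

theorem lift_cliffordι_tensorSquareMul_add_comm (z : F ⊗[C] F) :
    TensorAlgebra.lift C (cliffordι Rsub A j) (tensorSquareMul C F z) +
        TensorAlgebra.lift C (cliffordι Rsub A j)
          (tensorSquareMul C F (TensorProduct.comm C F F z)) =
      algebraMap A _ (TensorProduct.lift (bil0 C F Rsub A j) z) := by
  induction z using TensorProduct.induction_on with
  | zero => simp
  | tmul u v =>
    simp only [tensorSquareMul, TensorProduct.comm_tmul, TensorProduct.lift.tmul,
      LinearMap.compl₁₂_apply, LinearMap.mul_apply', map_mul, TensorAlgebra.lift_ι_apply,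
      cliffordι_apply, CliffordAlgebra.ι_mul_ι_add_swap, polar_cliffordQ_one_tmul]
  | add x y hx hy =>
    simp only [map_add, ← hx, ← hy]
    abel

theorem lift_cliffordι_tensorSquareMul_eq_zero (hR : Rsub ≤ symTensors C F) {r : F ⊗[C] F}
    (hr : r ∈ Rsub) : TensorAlgebra.lift C (cliffordι Rsub A j) (tensorSquareMul C F r) = 0 := by
  have hcomm := comm_eq_self_of_mem_symTensors (hR hr)
  have h2 := lift_cliffordι_tensorSquareMul_add_comm Rsub A j r
  rw [hcomm, lift_bil0_eq_zero Rsub A j (hcomm.symm ▸ Rsub.add_mem hr hr), map_zero,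
    ← two_smul C] at h2
  rw [← one_smul C (TensorAlgebra.lift C _ _), ← invOf_mul_self (2 : C), mul_smul, h2,
    smul_zero]

def toClifford (hR : Rsub ≤ symTensors C F) :
    RingQuot (relOfR C F Rsub) →ₐ[C] CliffordAlgebra (cliffordQ C F Rsub A j) :=
  RingQuot.liftAlgHom C ⟨TensorAlgebra.lift C (cliffordι Rsub A j), by
    rintro _ _ ⟨⟨r, hr, rfl⟩, rfl⟩
    rw [map_zero, lift_cliffordι_tensorSquareMul_eq_zero Rsub A j hR hr]⟩

theorem toClifford_mkAlgHom (hR : Rsub ≤ symTensors C F) (x : TensorAlgebra C F) :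
    toClifford Rsub A j hR (RingQuot.mkAlgHom C (relOfR C F Rsub) x) =
      TensorAlgebra.lift C (cliffordι Rsub A j) x :=
  RingQuot.liftAlgHom_mkAlgHom_apply _ _ _ _

theorem toClifford_mkAlgHom_ι (hR : Rsub ≤ symTensors C F) (u : F) :
    toClifford Rsub A j hR (RingQuot.mkAlgHom C (relOfR C F Rsub) (TensorAlgebra.ι C u)) =
      CliffordAlgebra.ι _ (1 ⊗ₜ u) := by
  rw [toClifford_mkAlgHom, TensorAlgebra.lift_ι_apply, cliffordι_apply]

theorem algebraMap_mem_range_toClifford (hR : Rsub ≤ symTensors C F)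
    (hUP : ∀ (B : Type u) [CommRing B] [Algebra C B] (g : SymQuot C F Rsub →ₗ[C] B),
      ∃! h : A →ₐ[C] B, h.toLinearMap ∘ₗ j = g) (a : A) :
    algebraMap A _ a ∈ (toClifford Rsub A j hR).range := by
  suffices Algebra.adjoin C (Set.range j) ≤
      (toClifford Rsub A j hR).range.comap ((Algebra.ofId A _).restrictScalars C) by
    exact this (Algebra.adjoin_range_eq_top_of_unique_lift j hUP ▸ Algebra.mem_top)
  rw [Algebra.adjoin_le_iff]
  rintro _ ⟨q, rfl⟩
  obtain ⟨z, hz⟩ : j q ∈ LinearMap.range (TensorProduct.lift (bil0 C F Rsub A j)) :=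
    range_lift_bil0 Rsub A j ▸ ⟨q, rfl⟩
  refine ⟨RingQuot.mkAlgHom C _
    (tensorSquareMul C F z + tensorSquareMul C F (TensorProduct.comm C F F z)), ?_⟩
  change toClifford Rsub A j hR _ = algebraMap A _ (j q)
  rw [toClifford_mkAlgHom, map_add, lift_cliffordι_tensorSquareMul_add_comm, hz]

theorem toClifford_surjective (hR : Rsub ≤ symTensors C F)
    (hUP : ∀ (B : Type u) [CommRing B] [Algebra C B] (g : SymQuot C F Rsub →ₗ[C] B),
      ∃! h : A →ₐ[C] B, h.toLinearMap ∘ₗ j = g) :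
    Function.Surjective (toClifford Rsub A j hR) := by
  intro x
  suffices x ∈ (toClifford Rsub A j hR).range from this
  induction x using CliffordAlgebra.induction with
  | algebraMap a => exact algebraMap_mem_range_toClifford Rsub A j hR hUP a
  | ι m =>
    induction m using TensorProduct.induction_on with
    | zero => rw [map_zero]; exact zero_mem _
    | tmul a u =>
      rw [← mul_one a, ← smul_eq_mul, ← TensorProduct.smul_tmul', map_smul, Algebra.smul_def]
      exact mul_mem (algebraMap_mem_range_toClifford Rsub A j hR hUP a)
        ⟨_, toClifford_mkAlgHom_ι Rsub A j hR u⟩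
    | add _ _ h₁ h₂ => rw [map_add]; exact add_mem h₁ h₂
  | mul _ _ ha hb => exact mul_mem ha hb
  | add _ _ ha hb => exact add_mem ha hb

end Clifford

theorem frobenius_H_relations_symmetric_and_surjection_to_clifford
    [Invertible (2 : C)]
    (D : Type u) [CommRing D] [Algebra C D] {n : ℕ}
    (Λ : D →ₗ[C] C)
    (e f : Module.Basis (Fin n) C D)
    (hdual : ∀ i j, Λ (e i * f j) = if i = j then 1 else 0)
    (A : Type u) [CommRing A] [Algebra C A]
    (j : SymQuot C (FrobQuotF C D) (LinearMap.range (frobRho C D ⇑e ⇑f)) →ₗ[C] A)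
    (hUP : ∀ (B : Type u) [CommRing B] [Algebra C B]
      (g : SymQuot C (FrobQuotF C D) (LinearMap.range (frobRho C D ⇑e ⇑f)) →ₗ[C] B),
      ∃! h : A →ₐ[C] B, (h.toLinearMap ∘ₗ j) = g) :
    LinearMap.range (frobRho C D ⇑e ⇑f) ≤ symTensors C (FrobQuotF C D) ∧
    ((∃ W : Submodule C (FrobQuotF C D ⊗[C] FrobQuotF C D),
        W ≤ symTensors C (FrobQuotF C D) ∧
        LinearMap.range (frobRho C D ⇑e ⇑f) ⊓ W = ⊥ ∧
        LinearMap.range (frobRho C D ⇑e ⇑f) ⊔ W = symTensors C (FrobQuotF C D)) →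
      ∃ φ : RingQuot (relOfR C (FrobQuotF C D) (LinearMap.range (frobRho C D ⇑e ⇑f))) →ₐ[C]
          CliffordAlgebra (cliffordQ C (FrobQuotF C D) (LinearMap.range (frobRho C D ⇑e ⇑f)) A j),
        Function.Surjective φ ∧
        ∀ d : D,
          φ (RingQuot.mkAlgHom C (relOfR C (FrobQuotF C D) (LinearMap.range (frobRho C D ⇑e ⇑f)))
              (TensorAlgebra.ι C (frobPi C D d)))
            = CliffordAlgebra.ι
                (cliffordQ C (FrobQuotF C D) (LinearMap.range (frobRho C D ⇑e ⇑f)) A j)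
                ((1 : A) ⊗ₜ[C] frobPi C D d)) := by
  have hR := range_frobRho_le_symTensors Λ e hdual
  exact ⟨hR, fun _ => ⟨toClifford _ A j hR, toClifford_surjective _ A j hR hUP,
    fun d => toClifford_mkAlgHom_ι _ A j hR (frobPi C D d)⟩⟩
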